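/- arXiv:1705.04818 — 5 statements merged into one kernel-verified Lean document; each statement's English description precedes it below -/
import Mathlib

section
/- Let A be a real square matrix all of whose eigenvalues have negative real part (Hurwitz). Then there exists a positive definite symmetric matrix P such that AᵀP + PA is negative definite. -/
/-!
Every eigenvalue of `A` has real part below some `r < 0`. On a generalized eigenvector for `μ`,
`exp (t • A)` acts as `e^{tμ}` times a polynomial in `t`, so `‖exp (t • A)‖ = O(e^{rt})` and
`P = ∫₀^∞ F t dt` converges, where `F t = exp (t • Aᵀ) * exp (t • A)`. `P` is symmetric,
`x ⬝ᵥ P *ᵥ x = ∫₀^∞ |exp (t • A) *ᵥ x|² dt > 0` for `x ≠ 0` because `exp (t • A)` is invertible,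
and since `F' = Aᵀ * F + F * A` with `F t → 0`, the fundamental theorem of calculus gives
`Aᵀ * P + P * A = -F 0 = -1`.
-/

open Matrix

/-- `μ` is a (complex) eigenvalue of the matrix `A`. -/
def isEig {n : ℕ} (A : Matrix (Fin n) (Fin n) ℂ) (μ : ℂ) : Prop :=
  ∃ v : Fin n → ℂ, v ≠ 0 ∧ A.mulVec v = μ • v

/-- A real matrix is Hurwitz if all of its eigenvalues have negative real part. -/
def IsHurwitz {n : ℕ} (A : Matrix (Fin n) (Fin n) ℝ) : Prop :=
  ∀ μ : ℂ, isEig (A.map Complex.ofReal) μ → μ.re < 0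

/-- Positive definiteness of the quadratic form of `P`. -/
def PosDefQ {n : ℕ} (P : Matrix (Fin n) (Fin n) ℝ) : Prop :=
  ∀ x : Fin n → ℝ, x ≠ 0 → 0 < x ⬝ᵥ P.mulVec x

/-- Negative definiteness of the quadratic form of `P`. -/
def NegDefQ {n : ℕ} (P : Matrix (Fin n) (Fin n) ℝ) : Prop :=
  ∀ x : Fin n → ℝ, x ≠ 0 → x ⬝ᵥ P.mulVec x < 0

open NormedSpace Filter Asymptotics MeasureTheory Set Topology
-- A normed-algebra norm on matrices for which transposition is an isometry.
open scoped Nat Matrix.Norms.L2Operator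

theorem isBigO_cexp_mul_pow {μ : ℂ} {r : ℝ} (hr : μ.re < r) (j : ℕ) :
    (fun t : ℝ => Complex.exp (t * μ) * (t : ℂ) ^ j) =O[atTop] fun t => Real.exp (r * t) := by
  have hexp : (fun t : ℝ => Complex.exp (t * μ)) =O[atTop] fun t => Real.exp (μ.re * t) :=
    isBigO_of_le _ fun t => by simp [Complex.norm_exp, mul_comm]
  have hpow : (fun t : ℝ => (t : ℂ) ^ j) =O[atTop] fun t => Real.exp ((r - μ.re) * t) := by
    rw [← isBigO_norm_left]
    simpa using (isLittleO_pow_exp_pos_mul_atTop j (sub_pos.mpr hr)).isBigO.norm_left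
  refine (hexp.mul hpow).congr_right fun t => ?_
  rw [← Real.exp_add]
  ring_nf

theorem integrableOn_Ioi_of_isBigO_exp {E : Type*} [NormedAddCommGroup E] {f : ℝ → E} {a r : ℝ}
    (hr : r < 0) (hf : ContinuousOn f (Ici a)) (ho : f =O[atTop] fun t => Real.exp (r * t)) :
    IntegrableOn f (Ioi a) :=
  integrableOn_Ici_iff_integrableOn_Ioi (by finiteness) |>.mp <|
    (hf.locallyIntegrableOn measurableSet_Ici).integrableOn_of_isBigO_atTop ho
      ⟨Ioi a, Ioi_mem_atTop a, by simpa using exp_neg_integrableOn_Ioi a (neg_pos.2 hr)⟩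

theorem Matrix.isBigO_of_forall_mulVec_single {α m n 𝕜 : Type*} [Fintype m] [Fintype n]
    [DecidableEq n] [RCLike 𝕜] {l : Filter α} {f : α → Matrix m n 𝕜} {g : α → ℝ}
    (h : ∀ j, (fun a => f a *ᵥ Pi.single j 1) =O[l] g) : f =O[l] g := by
  have hcols : (fun (a : α) (j : n) (i : m) => f a i j) =O[l] g :=
    isBigO_pi.2 fun j => by simpa [mulVec_single_one] using h j
  let untranspose : (n → m → 𝕜) →ₗ[𝕜] Matrix m n 𝕜 := (transposeLinearEquiv n m 𝕜 𝕜).toLinearMap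
  exact (untranspose.toContinuousLinearMap.isBigO_comp _ _).trans hcols

theorem Matrix.dotProduct_integral_mulVec {m n X : Type*} [Fintype m] [Fintype n]
    [DecidableEq m] [DecidableEq n] [MeasurableSpace X] {μ : Measure X} {f : X → Matrix m n ℝ}
    (hf : Integrable f μ) (x : m → ℝ) (y : n → ℝ) :
    x ⬝ᵥ (∫ a, f a ∂μ) *ᵥ y = ∫ a, x ⬝ᵥ f a *ᵥ y ∂μ := by
  let L : Matrix m n ℝ →ₗ[ℝ] ℝ :=
    LinearMap.applyₗ y ∘ₗ LinearMap.applyₗ x ∘ₗ (toLinearMap₂' ℝ).toLinearMap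
  have hL : ∀ M, L M = x ⬝ᵥ M *ᵥ y := fun M => toLinearMap₂'_apply' M x y
  simp only [← hL]
  exact (L.toContinuousLinearMap.integral_comp_comm hf).symm

theorem MeasureTheory.Integrable.dotProduct_mulVec {m n X : Type*} [Fintype m] [Fintype n]
    [DecidableEq m] [DecidableEq n] [MeasurableSpace X] {μ : Measure X} {f : X → Matrix m n ℝ}
    (hf : Integrable f μ) (x : m → ℝ) (y : n → ℝ) :
    Integrable (fun a => x ⬝ᵥ f a *ᵥ y) μ := by
  let L : Matrix m n ℝ →ₗ[ℝ] ℝ :=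
    LinearMap.applyₗ y ∘ₗ LinearMap.applyₗ x ∘ₗ (toLinearMap₂' ℝ).toLinearMap
  simpa [L, toLinearMap₂'_apply'] using L.toContinuousLinearMap.integrable_comp hf

section

variable {ι : Type*} [Fintype ι] [DecidableEq ι]

theorem Matrix.exp_mulVec_eq_sum_of_pow_mulVec_eq_zero (N : Matrix ι ι ℂ) {v : ι → ℂ} {k : ℕ}
    (hv : N ^ k *ᵥ v = 0) :
    exp N *ᵥ v = ∑ j ∈ Finset.range k, (j !⁻¹ : ℂ) • (N ^ j *ᵥ v) := by
  have hsum : HasSum (fun j => (j !⁻¹ : ℂ) • N ^ j *ᵥ v) (exp N *ᵥ v) := by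
    have := (exp_series_hasSum_exp' (𝕂 := ℂ) N).map ((mulVecBilin ℂ ℂ).flip v)
      (LinearMap.continuous_of_finiteDimensional _)
    simp only [Function.comp_def, map_smul, LinearMap.flip_apply, mulVecBilin_apply] at this
    -- not `simpa`: the instances in `this` come from the normed ring and agree only up to defeq
    exact this
  refine hsum.unique (hasSum_sum_of_ne_finset_zero fun j hj => ?_)
  obtain ⟨i, rfl⟩ := Nat.exists_eq_add_of_le (not_lt.mp (Finset.mem_range.not.mp hj))
  rw [add_comm, pow_add, ← mulVec_mulVec, hv, mulVec_zero, smul_zero]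

theorem Matrix.exp_smul_eq_exp_mul_smul_exp_smul_sub (A : Matrix ι ι ℂ) (μ : ℂ) (t : ℝ) :
    exp (t • A) = Complex.exp (t * μ) • exp (t • (A - μ • 1)) := by
  have hsplit : t • A = algebraMap ℂ _ (t * μ) + t • (A - μ • 1) := by
    rw [Algebra.algebraMap_eq_smul_one, smul_sub, mul_smul, Complex.coe_smul, add_sub_cancel]
  have hscalar : exp (algebraMap ℂ (Matrix ι ι ℂ) (t * μ)) = Complex.exp (t * μ) • 1 := by
    rw [Complex.exp_eq_exp_ℂ, ← Algebra.algebraMap_eq_smul_one]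
    exact (algebraMap_exp_comm _).symm
  rw [hsplit, exp_add_of_commute _ _ (Algebra.commute_algebraMap_left _ _), hscalar,
    smul_one_mul]

theorem Matrix.isBigO_exp_smul_mulVec_of_pow_mulVec_eq_zero (A : Matrix ι ι ℂ) {μ : ℂ} {r : ℝ}
    (hr : μ.re < r) {v : ι → ℂ} {k : ℕ} (hv : (A - μ • 1) ^ k *ᵥ v = 0) :
    (fun t : ℝ => exp (t • A) *ᵥ v) =O[atTop] fun t => Real.exp (r * t) := by
  set N := A - μ • 1
  have hexpand : ∀ t : ℝ, exp (t • A) *ᵥ v = ∑ j ∈ Finset.range k,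
      (Complex.exp (t * μ) * (t : ℂ) ^ j) • ((j !⁻¹ : ℂ) • (N ^ j *ᵥ v)) := by
    intro t
    have htN : (t • N) ^ k *ᵥ v = 0 := by rw [smul_pow, smul_mulVec, hv, smul_zero]
    rw [exp_smul_eq_exp_mul_smul_exp_smul_sub A μ, smul_mulVec,
      exp_mulVec_eq_sum_of_pow_mulVec_eq_zero _ htN, Finset.smul_sum]
    refine Finset.sum_congr rfl fun j _ => ?_
    rw [smul_pow, smul_mulVec, smul_comm, ← Complex.coe_smul]
    simp only [smul_smul]
    push_cast
    ring_nf
  simp_rw [hexpand]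
  exact IsBigO.fun_sum fun j _ =>
    (isBigO_of_le' _ fun t => by rw [norm_smul, mul_comm]).trans (isBigO_cexp_mul_pow hr j)

theorem Matrix.isBigO_exp_smul_mulVec (A : Matrix ι ι ℂ) {r : ℝ}
    (hr : ∀ μ, Module.End.HasEigenvalue (toLin' A) μ → μ.re < r) (v : ι → ℂ) :
    (fun t : ℝ => exp (t • A) *ᵥ v) =O[atTop] fun t => Real.exp (r * t) := by
  have hv : v ∈ ⨆ μ, Module.End.maxGenEigenspace (toLin' A) μ := by
    rw [Module.End.iSup_maxGenEigenspace_eq_top]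
    trivial
  refine Submodule.iSup_induction _ (motive := fun w =>
      (fun t : ℝ => exp (t • A) *ᵥ w) =O[atTop] fun t => Real.exp (r * t)) hv
    (fun μ w hw => ?_) (by simpa only [mulVec_zero] using isBigO_zero _ _)
    fun w₁ w₂ h₁ h₂ => by simpa [mulVec_add] using h₁.add h₂
  rcases eq_or_ne w 0 with rfl | hw0
  · simpa only [mulVec_zero] using isBigO_zero _ _
  have hμ : Module.End.HasEigenvalue (toLin' A) μ :=
    Module.End.HasUnifEigenvalue.lt zero_lt_one ((Submodule.ne_bot_iff _).mpr ⟨w, hw, hw0⟩)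
  obtain ⟨k, hk⟩ := (Module.End.mem_maxGenEigenspace _ _ _).mp hw
  refine isBigO_exp_smul_mulVec_of_pow_mulVec_eq_zero A (hr μ hμ) (k := k) ?_
  rwa [← toLin'_apply, toLin'_pow, map_sub, map_smul, toLin'_one]

theorem Matrix.exp_map_ofReal (A : Matrix ι ι ℝ) :
    exp (A.map Complex.ofReal) = (exp A).map Complex.ofReal := by
  let : NormedAlgebra ℚ (Matrix ι ι ℝ) := .restrictScalars ℚ ℝ _
  have hcont : Continuous (Complex.ofRealHom.mapMatrix : Matrix ι ι ℝ →+* Matrix ι ι ℂ) :=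
    continuous_id.matrix_map Complex.continuous_ofReal
  exact (map_exp _ hcont A).symm

theorem Matrix.isBigO_exp_smul_mulVec_of_map_ofReal (A : Matrix ι ι ℝ) {r : ℝ}
    (hr : ∀ μ, Module.End.HasEigenvalue (toLin' (A.map Complex.ofReal)) μ → μ.re < r)
    (x : ι → ℝ) :
    (fun t : ℝ => exp (t • A) *ᵥ x) =O[atTop] fun t => Real.exp (r * t) := by
  have hC := isBigO_pi.mp (isBigO_exp_smul_mulVec (A.map Complex.ofReal) hr (fun i => (x i : ℂ)))
  refine isBigO_pi.mpr fun i => isBigO_norm_left.mp ((hC i).norm_left.congr_left fun t => ?_)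
  have hsmul : t • A.map Complex.ofReal = (t • A).map Complex.ofReal := by
    ext
    simp [Complex.real_smul]
  rw [hsmul, exp_map_ofReal, ← Complex.norm_real]
  exact congrArg norm (RingHom.map_mulVec Complex.ofRealHom _ x i).symm

theorem Matrix.hasDerivAt_exp_smul_transpose_mul_exp_smul (A : Matrix ι ι ℝ) (t : ℝ) :
    HasDerivAt (fun s : ℝ => exp (s • Aᵀ) * exp (s • A))
      (Aᵀ * (exp (t • Aᵀ) * exp (t • A)) + exp (t • Aᵀ) * exp (t • A) * A) t :=
  ((hasDerivAt_exp_smul_const' Aᵀ t).mul (hasDerivAt_exp_smul_const A t)).congr_deriv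
    (by rw [mul_assoc, mul_assoc])

theorem Matrix.continuous_exp_smul_transpose_mul_exp_smul (A : Matrix ι ι ℝ) :
    Continuous fun t : ℝ => exp (t • Aᵀ) * exp (t • A) :=
  continuous_iff_continuousAt.2 fun t =>
    (hasDerivAt_exp_smul_transpose_mul_exp_smul A t).continuousAt

theorem Matrix.isBigO_exp_smul_transpose_mul_exp_smul (A : Matrix ι ι ℝ) {r : ℝ}
    (hA : (fun t : ℝ => exp (t • A)) =O[atTop] fun t => Real.exp (r * t)) :
    (fun t : ℝ => exp (t • Aᵀ) * exp (t • A)) =O[atTop] fun t => Real.exp (2 * r * t) := by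
  have hAt : (fun t : ℝ => exp (t • Aᵀ)) =O[atTop] fun t => Real.exp (r * t) := by
    refine isBigO_norm_left.mp ((isBigO_norm_left.mpr hA).congr_left fun t => ?_)
    rw [← transpose_smul, exp_transpose, ← conjTranspose_eq_transpose_of_trivial,
      l2_opNorm_conjTranspose]
  refine (hAt.mul hA).congr_right fun t => ?_
  rw [← Real.exp_add]
  ring_nf

theorem Matrix.integrableOn_exp_smul_transpose_mul_exp_smul (A : Matrix ι ι ℝ) {r : ℝ}
    (hr : r < 0) (hA : (fun t : ℝ => exp (t • A)) =O[atTop] fun t => Real.exp (r * t)) :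
    IntegrableOn (fun t : ℝ => exp (t • Aᵀ) * exp (t • A)) (Ioi 0) :=
  integrableOn_Ioi_of_isBigO_exp (by linarith)
    (continuous_exp_smul_transpose_mul_exp_smul A).continuousOn
    (isBigO_exp_smul_transpose_mul_exp_smul A hA)

theorem Matrix.dotProduct_exp_smul_transpose_mul_exp_smul_mulVec_pos (A : Matrix ι ι ℝ) (t : ℝ)
    {x : ι → ℝ} (hx : x ≠ 0) : 0 < x ⬝ᵥ (exp (t • Aᵀ) * exp (t • A)) *ᵥ x := by
  have hunit : IsUnit (exp (t • A)) := isUnit_exp _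
  have hne : exp (t • A) *ᵥ x ≠ 0 := fun h =>
    hx (mulVec_injective_iff_isUnit.mpr hunit (h.trans (mulVec_zero _).symm))
  rw [← transpose_smul, exp_transpose, ← mulVec_mulVec, dotProduct_mulVec, vecMul_transpose]
  simpa using dotProduct_self_star_pos_iff.mpr hne

noncomputable def Matrix.lyapunovGramian (A : Matrix ι ι ℝ) : Matrix ι ι ℝ :=
  ∫ t in Ioi (0 : ℝ), exp (t • Aᵀ) * exp (t • A)

theorem Matrix.lyapunovGramian_transpose (A : Matrix ι ι ℝ) :
    (lyapunovGramian A)ᵀ = lyapunovGramian A := by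
  let T : Matrix ι ι ℝ ≃L[ℝ] Matrix ι ι ℝ :=
    (transposeLinearEquiv ι ι ℝ ℝ).toContinuousLinearEquiv
  change T (lyapunovGramian A) = _
  rw [lyapunovGramian, ← T.integral_comp_comm]
  congr with t : 1
  simp [T, transpose_mul, ← exp_transpose]

theorem Matrix.dotProduct_lyapunovGramian_mulVec_pos (A : Matrix ι ι ℝ) {r : ℝ}
    (hr : r < 0) (hA : (fun t : ℝ => exp (t • A)) =O[atTop] fun t => Real.exp (r * t))
    {x : ι → ℝ} (hx : x ≠ 0) : 0 < x ⬝ᵥ lyapunovGramian A *ᵥ x := by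
  have hint := integrableOn_exp_smul_transpose_mul_exp_smul A hr hA
  have hquad := fun t => dotProduct_exp_smul_transpose_mul_exp_smul_mulVec_pos A t hx
  have hquad_int : IntegrableOn (fun t : ℝ => x ⬝ᵥ (exp (t • Aᵀ) * exp (t • A)) *ᵥ x) (Ioi 0) :=
    hint.dotProduct_mulVec x x
  rw [lyapunovGramian, dotProduct_integral_mulVec hint,
    integral_pos_iff_support_of_nonneg (fun t => (hquad t).le) hquad_int,
    Function.support_eq_univ fun t => (hquad t).ne', Measure.restrict_apply_univ, Real.volume_Ioi]
  exact ENNReal.zero_lt_top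

theorem Matrix.transpose_mul_lyapunovGramian_add_lyapunovGramian_mul (A : Matrix ι ι ℝ) {r : ℝ}
    (hr : r < 0) (hA : (fun t : ℝ => exp (t • A)) =O[atTop] fun t => Real.exp (r * t)) :
    Aᵀ * lyapunovGramian A + lyapunovGramian A * A = -1 := by
  have hint := integrableOn_exp_smul_transpose_mul_exp_smul A hr hA
  have hlim : Tendsto (fun t : ℝ => exp (t • Aᵀ) * exp (t • A)) atTop (𝓝 0) :=
    (isBigO_exp_smul_transpose_mul_exp_smul A hA).trans_tendsto
      (Real.tendsto_exp_comp_nhds_zero.2 (tendsto_id.const_mul_atTop_of_neg (by linarith)))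
  have hftc := integral_Ioi_of_hasDerivAt_of_tendsto'
    (fun t _ => hasDerivAt_exp_smul_transpose_mul_exp_smul A t)
    ((hint.const_mul Aᵀ).add (hint.mul_const A)) hlim
  rw [integral_add (hint.const_mul Aᵀ) (hint.mul_const A), integral_const_mul_of_integrable hint,
    integral_mul_const_of_integrable hint] at hftc
  simpa [lyapunovGramian] using hftc

end

theorem isEig_of_hasEigenvalue {n : ℕ} {A : Matrix (Fin n) (Fin n) ℂ} {μ : ℂ}
    (hμ : Module.End.HasEigenvalue (toLin' A) μ) : isEig A μ := by
  obtain ⟨v, hv⟩ := hμ.exists_hasEigenvector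
  exact ⟨v, hv.2, by rw [← toLin'_apply, hv.apply_eq_smul]⟩

theorem IsHurwitz.exists_neg_forall_re_lt {n : ℕ} {A : Matrix (Fin n) (Fin n) ℝ}
    (hA : IsHurwitz A) :
    ∃ r < 0, ∀ μ, Module.End.HasEigenvalue (toLin' (A.map Complex.ofReal)) μ → μ.re < r := by
  have hev : ∀ᶠ r in 𝓝[<] (0 : ℝ),
      ∀ μ ∈ {μ | Module.End.HasEigenvalue (toLin' (A.map Complex.ofReal)) μ}, μ.re < r :=
    (Module.End.finite_hasEigenvalue _).eventually_all.2 fun μ hμ =>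
      nhdsWithin_le_nhds (lt_mem_nhds (hA μ (isEig_of_hasEigenvalue hμ)))
  obtain ⟨r, hr, hr0⟩ := (hev.and self_mem_nhdsWithin).exists
  exact ⟨r, hr0, hr⟩

theorem IsHurwitz.exists_isBigO_exp_smul {n : ℕ} {A : Matrix (Fin n) (Fin n) ℝ}
    (hA : IsHurwitz A) :
    ∃ r < 0, (fun t : ℝ => exp (t • A)) =O[atTop] fun t => Real.exp (r * t) := by
  obtain ⟨r, hr0, hr⟩ := IsHurwitz.exists_neg_forall_re_lt hA
  exact ⟨r, hr0, isBigO_of_forall_mulVec_single fun _ =>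
    isBigO_exp_smul_mulVec_of_map_ofReal A hr _⟩

/-- If `A` is Hurwitz, then there exists a symmetric positive definite matrix `P`
such that `AᵀP + PA` is negative definite. -/
theorem stmt0 {n : ℕ} (A : Matrix (Fin n) (Fin n) ℝ) (hA : IsHurwitz A) :
    ∃ P : Matrix (Fin n) (Fin n) ℝ, P.IsSymm ∧ PosDefQ P ∧ NegDefQ (Aᵀ * P + P * A) := by
  obtain ⟨r, hr, hdecay⟩ := IsHurwitz.exists_isBigO_exp_smul hA
  refine ⟨lyapunovGramian A, lyapunovGramian_transpose A,
    fun x hx => dotProduct_lyapunovGramian_mulVec_pos A hr hdecay hx, fun x hx => ?_⟩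
  rw [transpose_mul_lyapunovGramian_add_lyapunovGramian_mul A hr hdecay, neg_mulVec, one_mulVec,
    dotProduct_neg, neg_lt_zero]
  simpa using dotProduct_self_star_pos_iff.mpr hx
end

section
/- Let f : ℝⁿ → ℝⁿ be continuous, with each component f_i nonnegative, monotonically increasing (x ≤ y entrywise implies f(x) ≤ f(y)), and concave on [0,1]ⁿ with f_i(θx) ≤ θ f_i(x) for θ ≥ 1 whenever x, θx ∈ [0,1]ⁿ. Let γ_i > 0 and define T_i(x) = f_i(x)/(γ_i + f_i(x)). If x* and x** are two fixed points of T in (0,1]ⁿ with f_i(x*) > 0 strictly increasing in the sense that f_{i}(θ x) < θ f_i(x) implies strictness at the maximizing index, then x* = x**; i.e., T has at most one fixed point in (0,1]ⁿ under the stated concavity/monotonicity conditions. -/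
/-!
Compare two fixed points `x`, `y` through the largest ratio `θ = x i / y i`. If `θ > 1`, then
`x ≤ θ • y`, so monotonicity and subhomogeneity give `f i x ≤ θ * f i y`; since `t ↦ t / (γ + t)`
is increasing and strictly subhomogeneous this yields `x i < θ * y i = x i`. Hence `x ≤ y`, and by
symmetry `x = y`.
-/

lemma div_add_self_le_div_add_self {γ a b : ℝ} (hγ : 0 < γ) (ha : 0 ≤ a) (hab : a ≤ b) :
    a / (γ + a) ≤ b / (γ + b) := by
  rw [div_le_div_iff₀ (by linarith) (by linarith)]
  nlinarith

lemma mul_div_add_mul_lt_mul_div_add {γ θ t : ℝ} (hγ : 0 < γ) (hθ : 1 < θ) (ht : 0 < t) :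
    θ * t / (γ + θ * t) < θ * (t / (γ + t)) := by
  rw [← mul_div_assoc]
  exact div_lt_div_of_pos_left (by positivity) (by linarith) (by nlinarith)

lemma pos_of_div_add_pos {γ t : ℝ} (ht : 0 ≤ t) (h : 0 < t / (γ + t)) : 0 < t := by
  rcases ht.lt_or_eq with ht | rfl
  · exact ht
  · simp at h

theorem le_of_fixedPoints_of_subhomogeneous {ι : Type*} [Finite ι]
    (f : ι → (ι → ℝ) → ℝ) (γ : ι → ℝ) (hγ : ∀ i, 0 < γ i)
    (hnn : ∀ i (x : ι → ℝ), 0 ≤ x → 0 ≤ f i x)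
    (hmono : ∀ i (x y : ι → ℝ), 0 ≤ x → x ≤ y → f i x ≤ f i y)
    (hsub : ∀ i (θ : ℝ) (x : ι → ℝ), 1 ≤ θ → 0 ≤ x → f i (θ • x) ≤ θ * f i x)
    {x y : ι → ℝ} (hx : ∀ i, 0 < x i) (hy : ∀ i, 0 < y i)
    (hfx : ∀ i, x i = f i x / (γ i + f i x)) (hfy : ∀ i, y i = f i y / (γ i + f i y)) :
    x ≤ y := by
  by_contra hxy
  obtain ⟨j, hj⟩ := not_forall.mp (Pi.le_def.not.mp hxy)
  have : Nonempty ι := ⟨j⟩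
  obtain ⟨i, hi⟩ := Finite.exists_max fun k => x k / y k
  set θ := x i / y i
  have hθ : 1 < θ := ((one_lt_div (hy j)).mpr (not_le.mp hj)).trans_le (hi j)
  have hx0 : 0 ≤ x := fun k => (hx k).le
  have hy0 : 0 ≤ y := fun k => (hy k).le
  have hx_le : x ≤ θ • y := fun k => (div_le_iff₀ (hy k)).mp (hi k)
  have hfi : f i x ≤ θ * f i y :=
    (hmono i x _ hx0 hx_le).trans (hsub i θ y hθ.le hy0)
  have hF : 0 < f i y := pos_of_div_add_pos (hnn i y hy0) (hfy i ▸ hy i)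
  have : x i < x i :=
    calc x i = f i x / (γ i + f i x) := hfx i
      _ ≤ θ * f i y / (γ i + θ * f i y) := div_add_self_le_div_add_self (hγ i) (hnn i x hx0) hfi
      _ < θ * (f i y / (γ i + f i y)) := mul_div_add_mul_lt_mul_div_add (hγ i) hθ hF
      _ = x i := by rw [← hfy i, div_mul_cancel₀ _ (hy i).ne']
  exact lt_irrefl _ this

theorem stmt8_general {n : ℕ} (f : Fin n → (Fin n → ℝ) → ℝ) (γ : Fin n → ℝ)
    (hγ : ∀ i, 0 < γ i)
    (hnn : ∀ i (x : Fin n → ℝ), 0 ≤ x → 0 ≤ f i x)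
    (hmono : ∀ i (x y : Fin n → ℝ), 0 ≤ x → x ≤ y → f i x ≤ f i y)
    (hsub : ∀ i (θ : ℝ) (x : Fin n → ℝ), 1 ≤ θ → 0 ≤ x → f i (θ • x) ≤ θ * f i x)
    (xs xss : Fin n → ℝ)
    (hxs : ∀ i, 0 < xs i ∧ xs i ≤ 1) (hxss : ∀ i, 0 < xss i ∧ xss i ≤ 1)
    (hfix : ∀ i, xs i = f i xs / (γ i + f i xs))
    (hfix' : ∀ i, xss i = f i xss / (γ i + f i xss)) :
    xs = xss :=
  le_antisymm
    (le_of_fixedPoints_of_subhomogeneous f γ hγ hnn hmono hsub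
      (fun i => (hxs i).1) (fun i => (hxss i).1) hfix hfix')
    (le_of_fixedPoints_of_subhomogeneous f γ hγ hnn hmono hsub
      (fun i => (hxss i).1) (fun i => (hxs i).1) hfix' hfix)

/-- Uniqueness of fixed points of `T_i(x) = f_i(x)/(γ_i + f_i(x))` in `(0,1]ⁿ`, for
nonnegative, monotone, strictly increasing and concave (subhomogeneous) rates `f_i`. -/
theorem stmt8 {n : ℕ} (f : Fin n → (Fin n → ℝ) → ℝ) (γ : Fin n → ℝ)
    (hγ : ∀ i, 0 < γ i)
    (hnn : ∀ i (x : Fin n → ℝ), 0 ≤ x → 0 ≤ f i x)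
    (hmono : ∀ i (x y : Fin n → ℝ), 0 ≤ x → x ≤ y → f i x ≤ f i y)
    (hstrict : ∀ i (x y : Fin n → ℝ), 0 ≤ x → (∀ j, x j < y j) → f i x < f i y)
    (hsub : ∀ i (θ : ℝ) (x : Fin n → ℝ), 1 ≤ θ → 0 ≤ x → f i (θ • x) ≤ θ * f i x)
    (xs xss : Fin n → ℝ)
    (hxs : ∀ i, 0 < xs i ∧ xs i ≤ 1) (hxss : ∀ i, 0 < xss i ∧ xss i ≤ 1)
    (hfix : ∀ i, xs i = f i xs / (γ i + f i xs))
    (hfix' : ∀ i, xss i = f i xss / (γ i + f i xss)) :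
    xs = xss :=
  stmt8_general f γ hγ hnn hmono hsub xs xss hxs hxss hfix hfix'
end

section
/- Suppose x* ∈ (0,1]ᴺ satisfies (1 − x*_i) f_i(x*) = γ_i x*_i for all i, where f_i is concave with f_i(θx) ≤ θ f_i(x) for θ ≥ 1, monotone increasing, and γ_i > 0. If u ∈ (0,1]ᴺ and Z := max_k u_k/x*_k > 1 with the maximum attained at k₀ and f_{k₀}(u) > 0, then (1 − u_{k₀}) f_{k₀}(u) − γ_{k₀} u_{k₀} < 0. -/
/-!
Write `Z = u k₀ / x* k₀`. Maximality of the ratio gives `u ≤ Z • x*`, so monotonicity and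
subhomogeneity give `f k₀ u ≤ Z f k₀ x*`. Since `u k₀ = Z x* k₀ > x* k₀`, the equilibrium identity
yields `(1 - u k₀) f k₀ u ≤ (1 - u k₀) Z f k₀ x* < (1 - x* k₀) Z f k₀ x* = γ k₀ u k₀`, where
strictness comes from `0 < f k₀ u ≤ Z f k₀ x*`.
-/

theorem Pi.le_smul_of_forall_div_le {ι : Type*} {u x : ι → ℝ} {c : ℝ} (hx : ∀ i, 0 < x i)
    (h : ∀ i, u i / x i ≤ c) : u ≤ c • x := fun i => by
  simpa using (div_le_iff₀ (hx i)).1 (h i)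

theorem apply_le_mul_of_le_smul {ι : Type*} {g : (ι → ℝ) → ℝ}
    (hmono : ∀ x y : ι → ℝ, 0 ≤ x → x ≤ y → g x ≤ g y)
    (hsub : ∀ (θ : ℝ) (x : ι → ℝ), 1 ≤ θ → 0 ≤ x → g (θ • x) ≤ θ * g x)
    {u x : ι → ℝ} {θ : ℝ} (hu : 0 ≤ u) (hx : 0 ≤ x) (hθ : 1 ≤ θ) (hux : u ≤ θ • x) :
    g u ≤ θ * g x :=
  (hmono u (θ • x) hu hux).trans (hsub θ x hθ hx)

theorem stmt13_general {N : ℕ} (f : Fin N → (Fin N → ℝ) → ℝ) (γ xs u : Fin N → ℝ)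
    (hmono : ∀ i (x y : Fin N → ℝ), 0 ≤ x → x ≤ y → f i x ≤ f i y)
    (hsub : ∀ i (θ : ℝ) (x : Fin N → ℝ), 1 ≤ θ → 0 ≤ x → f i (θ • x) ≤ θ * f i x)
    (hxs : ∀ i, 0 < xs i ∧ xs i ≤ 1)
    (heq : ∀ i, (1 - xs i) * f i xs = γ i * xs i)
    (hu : ∀ i, 0 < u i ∧ u i ≤ 1)
    (k₀ : Fin N)
    (hmax : ∀ k, u k / xs k ≤ u k₀ / xs k₀)
    (hZ : 1 < u k₀ / xs k₀)
    (hf : 0 < f k₀ u) :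
    (1 - u k₀) * f k₀ u - γ k₀ * u k₀ < 0 := by
  set Z := u k₀ / xs k₀
  have hxs_pos : ∀ i, 0 < xs i := fun i => (hxs i).1
  have hfu : f k₀ u ≤ Z * f k₀ xs :=
    apply_le_mul_of_le_smul (hmono k₀) (hsub k₀) (fun i => (hu i).1.le)
      (fun i => (hxs_pos i).le) hZ.le (Pi.le_smul_of_forall_div_le hxs_pos hmax)
  have huk : u k₀ = Z * xs k₀ := (div_mul_cancel₀ _ (hxs_pos k₀).ne').symm
  have hxu : xs k₀ < u k₀ := by
    rw [huk]
    exact lt_mul_left (hxs_pos k₀) hZ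
  refine sub_neg.2 ?_
  calc (1 - u k₀) * f k₀ u ≤ (1 - u k₀) * (Z * f k₀ xs) :=
        mul_le_mul_of_nonneg_left hfu (sub_nonneg.2 (hu k₀).2)
    _ < (1 - xs k₀) * (Z * f k₀ xs) :=
        mul_lt_mul_of_pos_right (by linarith) (hf.trans_le hfu)
    _ = γ k₀ * u k₀ := by rw [huk]; linear_combination Z * heq k₀

/-- Key Lyapunov step (Claim 2 of Theorem 3): if `x*` is a positive equilibrium of
`du_i/dt = (1−u_i)f_i(u) − γ_i u_i`, and `u ∈ (0,1]ᴺ` with maximum ratio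
`Z = max_k u_k/x*_k > 1` attained at `k₀` with `f_{k₀}(u) > 0`, then
`(1 − u_{k₀}) f_{k₀}(u) − γ_{k₀} u_{k₀} < 0`. -/
theorem stmt13 {N : ℕ} (f : Fin N → (Fin N → ℝ) → ℝ) (γ xs u : Fin N → ℝ)
    (hγ : ∀ i, 0 < γ i)
    (hnn : ∀ i (x : Fin N → ℝ), 0 ≤ x → 0 ≤ f i x)
    (hmono : ∀ i (x y : Fin N → ℝ), 0 ≤ x → x ≤ y → f i x ≤ f i y)
    (hsub : ∀ i (θ : ℝ) (x : Fin N → ℝ), 1 ≤ θ → 0 ≤ x → f i (θ • x) ≤ θ * f i x)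
    (hxs : ∀ i, 0 < xs i ∧ xs i ≤ 1)
    (heq : ∀ i, (1 - xs i) * f i xs = γ i * xs i)
    (hu : ∀ i, 0 < u i ∧ u i ≤ 1)
    (k₀ : Fin N)
    (hmax : ∀ k, u k / xs k ≤ u k₀ / xs k₀)
    (hZ : 1 < u k₀ / xs k₀)
    (hf : 0 < f k₀ u) :
    (1 - u k₀) * f k₀ u - γ k₀ * u k₀ < 0 :=
  stmt13_general f γ xs u hmono hsub hxs heq hu k₀ hmax hZ hf
end

section
/- Let A be an irreducible Metzler matrix with s(A) = 0. Then there exists a positive definite diagonal matrix D such that AᵀD + DA is negative semi-definite, and 0 is a simple eigenvalue of AᵀD + DA with a positive eigenvector. -/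
/-!
Perron–Frobenius theory, via Wielandt's maximisation of the Collatz–Wielandt function, gives
positive vectors `u`, `w` and `r ∈ ℝ` with `A u = r u` and `Aᵀ w = r w`; testing the
eigen-equation of any eigenvalue `μ` against `w` gives `Re μ ≤ r`, so `r = s(A) = 0`.
With `D = diag(w / u)` the symmetric Metzler matrix `B = AᵀD + DA` has `B u = Aᵀ w + D A u = 0`,
hence `xᵀ B x = -½ ∑ᵢⱼ Bᵢⱼ uᵢ uⱼ (xᵢ/uᵢ - xⱼ/uⱼ)² ≤ 0`, with equality only if `x / u` is
constant along the nonzero entries of `B`, i.e. (by irreducibility) only if `x ∈ ℝ u`.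
-/

open Matrix

/-- `s(A)`: the maximum real part of an eigenvalue of the real matrix `A`. -/
noncomputable def sMax {n : ℕ} (A : Matrix (Fin n) (Fin n) ℝ) : ℝ :=
  sSup {r : ℝ | ∃ μ : ℂ, isEig (A.map Complex.ofReal) μ ∧ r = μ.re}

/-- A real square matrix is Metzler if its off-diagonal entries are nonnegative. -/
def IsMetzler {n : ℕ} (A : Matrix (Fin n) (Fin n) ℝ) : Prop :=
  ∀ i j, i ≠ j → 0 ≤ A i j

/-- Irreducibility of a matrix: no nontrivial invariant coordinate subset. -/
def IsIrreducibleMat {n : ℕ} (A : Matrix (Fin n) (Fin n) ℝ) : Prop :=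
  ∀ S : Set (Fin n), S.Nonempty → S ≠ Set.univ → ∃ i ∈ S, ∃ j, j ∉ S ∧ A i j ≠ 0

/-- Negative semi-definiteness of the quadratic form of `P`. -/
def NegSemiDefQ {n : ℕ} (P : Matrix (Fin n) (Fin n) ℝ) : Prop :=
  ∀ x : Fin n → ℝ, x ⬝ᵥ P.mulVec x ≤ 0

open Function Set

section Positivity

variable {n : ℕ} {B : Matrix (Fin n) (Fin n) ℝ}

lemma mul_le_mulVec_apply (hB : ∀ i j, 0 ≤ B i j) {y : Fin n → ℝ} (hy : 0 ≤ y) (i j : Fin n) :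
    B i j * y j ≤ (B *ᵥ y) i :=
  Finset.single_le_sum (f := fun k => B i k * y k) (fun k _ => mul_nonneg (hB i k) (hy k))
    (Finset.mem_univ j)

lemma mulVec_nonneg_of_nonneg (hB : ∀ i j, 0 ≤ B i j) {y : Fin n → ℝ} (hy : 0 ≤ y) :
    0 ≤ B *ᵥ y :=
  fun i => show 0 ≤ ∑ j, B i j * y j from
    Finset.sum_nonneg fun j _ => mul_nonneg (hB i j) (hy j)

lemma pow_mulVec_nonneg_of_nonneg (hB : ∀ i j, 0 ≤ B i j) {y : Fin n → ℝ} (hy : 0 ≤ y) (k : ℕ) :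
    0 ≤ B ^ k *ᵥ y := by
  induction k with
  | zero => simpa using hy
  | succ k ih => simpa [pow_succ', ← mulVec_mulVec] using mulVec_nonneg_of_nonneg hB ih

lemma one_add_apply_nonneg (hB : ∀ i j, 0 ≤ B i j) (i j : Fin n) : 0 ≤ (1 + B) i j := by
  rw [Matrix.add_apply, one_apply]
  split_ifs <;> linarith [hB i j]

lemma support_subset_support_one_add_mulVec (hB : ∀ i j, 0 ≤ B i j) {y : Fin n → ℝ}
    (hy : 0 ≤ y) : support y ⊆ support ((1 + B) *ᵥ y) := by
  intro i hi
  refine ne_of_gt ?_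
  calc 0 < y i := (hy i).lt_of_ne' hi
    _ ≤ (1 + B i i) * y i := le_mul_of_one_le_left (hy i) (by linarith [hB i i])
    _ = (1 + B) i i * y i := by rw [Matrix.add_apply, one_apply_eq]
    _ ≤ ((1 + B) *ᵥ y) i := mul_le_mulVec_apply (one_add_apply_nonneg hB) hy i i

lemma IsIrreducibleMat.exists_notMem_support_mem_support_one_add_mulVec
    (hIrr : IsIrreducibleMat B) (hB : ∀ i j, 0 ≤ B i j) {y : Fin n → ℝ} (hy : 0 ≤ y)
    (hne : (support y).Nonempty) (hnu : support y ≠ univ) :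
    ∃ i ∉ support y, i ∈ support ((1 + B) *ᵥ y) := by
  obtain ⟨i, hi, j, hj, hij⟩ := hIrr _ (nonempty_compl.2 hnu) (compl_ne_univ.2 hne)
  rw [notMem_compl_iff] at hj
  have hji : i ≠ j := fun h => hi (h ▸ hj)
  refine ⟨i, hi, ne_of_gt ?_⟩
  calc 0 < B i j * y j := mul_pos ((hB i j).lt_of_ne' hij) ((hy j).lt_of_ne' hj)
    _ = (1 + B) i j * y j := by rw [Matrix.add_apply, one_apply_ne hji, zero_add]
    _ ≤ ((1 + B) *ᵥ y) i := mul_le_mulVec_apply (one_add_apply_nonneg hB) hy i j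

lemma IsIrreducibleMat.min_le_ncard_support_pow_mulVec (hIrr : IsIrreducibleMat B)
    (hB : ∀ i j, 0 ≤ B i j) {x : Fin n → ℝ} (hx : 0 ≤ x) (hx0 : x ≠ 0) (k : ℕ) :
    min n (k + 1) ≤ (support ((1 + B) ^ k *ᵥ x)).ncard := by
  obtain ⟨i, hi⟩ := Function.ne_iff.1 hx0
  have hn := i.pos
  induction k with
  | zero =>
    have := (ncard_pos (toFinite _)).2 (⟨i, hi⟩ : (support x).Nonempty)
    simp only [pow_zero, one_mulVec]
    omega
  | succ k ih =>
    set y := (1 + B) ^ k *ᵥ x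
    have hy : 0 ≤ y := pow_mulVec_nonneg_of_nonneg (one_add_apply_nonneg hB) hx k
    have hyB : (1 + B) ^ (k + 1) *ᵥ x = (1 + B) *ᵥ y := by rw [pow_succ', ← mulVec_mulVec]
    rw [hyB]
    by_cases hu : support y = univ
    · have := ncard_le_ncard (hu ▸ support_subset_support_one_add_mulVec hB hy)
      simp only [ncard_univ, Nat.card_eq_fintype_card, Fintype.card_fin] at this
      omega
    · have hne : (support y).Nonempty := nonempty_of_ncard_ne_zero (by omega)
      obtain ⟨j, hj, hj'⟩ := hIrr.exists_notMem_support_mem_support_one_add_mulVec hB hy hne hu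
      have := ncard_lt_ncard
        (ssubset_of_subset_of_ne (support_subset_support_one_add_mulVec hB hy)
          fun h => hj (h ▸ hj'))
      omega

theorem IsIrreducibleMat.one_add_pow_mulVec_pos (hIrr : IsIrreducibleMat B)
    (hB : ∀ i j, 0 ≤ B i j) {x : Fin n → ℝ} (hx : 0 ≤ x) (hx0 : x ≠ 0) (i : Fin n) :
    0 < ((1 + B) ^ (n - 1) *ᵥ x) i := by
  have hfull : support ((1 + B) ^ (n - 1) *ᵥ x) = univ := by
    refine eq_of_subset_of_ncard_le (subset_univ _) ?_
    have := hIrr.min_le_ncard_support_pow_mulVec hB hx hx0 (n - 1)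
    have := i.pos
    simp only [ncard_univ, Nat.card_eq_fintype_card, Fintype.card_fin]
    omega
  exact (pow_mulVec_nonneg_of_nonneg (one_add_apply_nonneg hB) hx _ i).lt_of_ne'
    (hfull ▸ mem_univ i : i ∈ support _)

end Positivity

section CollatzWielandt

variable {n : ℕ} [NeZero n]

noncomputable def collatzWielandt (A : Matrix (Fin n) (Fin n) ℝ) (z : Fin n → ℝ) : ℝ :=
  Finset.univ.inf' Finset.univ_nonempty fun i => (A *ᵥ z) i / z i

variable {A : Matrix (Fin n) (Fin n) ℝ} {z : Fin n → ℝ}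

lemma collatzWielandt_mul_le (hz : ∀ i, 0 < z i) (i : Fin n) :
    collatzWielandt A z * z i ≤ (A *ᵥ z) i :=
  (le_div_iff₀ (hz i)).1 (Finset.inf'_le _ (Finset.mem_univ i))

lemma lt_collatzWielandt_iff (hz : ∀ i, 0 < z i) {t : ℝ} :
    t < collatzWielandt A z ↔ ∀ i, t * z i < (A *ᵥ z) i := by
  simp only [collatzWielandt, Finset.lt_inf'_iff, Finset.mem_univ, true_implies,
    lt_div_iff₀ (hz _)]

lemma collatzWielandt_smul {c : ℝ} (hc : 0 < c) :
    collatzWielandt A (c • z) = collatzWielandt A z := by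
  simp only [collatzWielandt, mulVec_smul, Pi.smul_apply, smul_eq_mul,
    mul_div_mul_left _ _ hc.ne']

lemma continuousOn_collatzWielandt :
    ContinuousOn (collatzWielandt A) {z | ∀ i, 0 < z i} :=
  ContinuousOn.finset_inf'_apply _ fun i _ =>
    (by fun_prop : Continuous fun z : Fin n → ℝ => (A *ᵥ z) i).continuousOn.div
      (continuous_apply i).continuousOn fun _ hz => (hz i).ne'

/-- Wielandt: maximise the Collatz–Wielandt value over `P` applied to the simplex; at a
maximiser `z`, if `A z ≠ t z` then `P (A z - t z) > 0` shows that `P z` has a larger value. -/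
theorem exists_pos_eigenvector_of_commute {P : Matrix (Fin n) (Fin n) ℝ} (hPA : Commute P A)
    (hP : ∀ x : Fin n → ℝ, 0 ≤ x → x ≠ 0 → ∀ i, 0 < (P *ᵥ x) i) :
    ∃ (r : ℝ) (u : Fin n → ℝ), (∀ i, 0 < u i) ∧ A *ᵥ u = r • u := by
  have hPpos : ∀ x ∈ stdSimplex ℝ (Fin n), ∀ i, 0 < (P *ᵥ x) i := fun x hx =>
    hP x hx.1 fun h => by simpa [h] using hx.2
  obtain ⟨x₀, hx₀, hmax⟩ := (isCompact_stdSimplex ℝ (Fin n)).exists_isMaxOn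
    ⟨_, single_mem_stdSimplex ℝ 0⟩
    ((continuousOn_collatzWielandt (A := A)).comp
      (by fun_prop : Continuous (P *ᵥ ·)).continuousOn hPpos)
  set z := P *ᵥ x₀
  have hz : ∀ i, 0 < z i := hPpos x₀ hx₀
  set t := collatzWielandt A z
  refine ⟨t, z, hz, ?_⟩
  by_contra hne
  have hPz : ∀ i, 0 < (P *ᵥ z) i := hP z (fun i => (hz i).le) fun h => by simpa [h] using hz 0
  have hlt : t < collatzWielandt A (P *ᵥ z) := by
    refine (lt_collatzWielandt_iff hPz).2 fun i => ?_
    have := hP (A *ᵥ z - t • z) (fun i => by simpa using collatzWielandt_mul_le hz i)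
      (sub_ne_zero.2 hne) i
    rwa [mulVec_sub, mulVec_smul, mulVec_mulVec, hPA.eq, ← mulVec_mulVec, Pi.sub_apply,
      Pi.smul_apply, smul_eq_mul, sub_pos] at this
  have hσ : 0 < ∑ i, z i := Finset.sum_pos (fun i _ => hz i) Finset.univ_nonempty
  have hx₁ : (∑ i, z i)⁻¹ • z ∈ stdSimplex ℝ (Fin n) :=
    ⟨fun i => by simpa using (mul_pos (inv_pos.2 hσ) (hz i)).le, by
      simp [← Finset.mul_sum, hσ.ne']⟩
  have : collatzWielandt A (P *ᵥ z) ≤ t := by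
    simpa only [Function.comp_apply, mulVec_smul, collatzWielandt_smul (inv_pos.2 hσ)]
      using isMaxOn_iff.1 hmax _ hx₁
  exact (this.trans_lt hlt).false

end CollatzWielandt

section Metzler

variable {n : ℕ} {A : Matrix (Fin n) (Fin n) ℝ}

lemma IsMetzler.transpose (hA : IsMetzler A) : IsMetzler Aᵀ :=
  fun i j hij => hA j i hij.symm

lemma IsIrreducibleMat.transpose (hA : IsIrreducibleMat A) : IsIrreducibleMat Aᵀ := by
  intro S hS hSu
  obtain ⟨i, hi, j, hj, hij⟩ := hA Sᶜ (nonempty_compl.2 hSu) (compl_ne_univ.2 hS)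
  exact ⟨j, notMem_compl_iff.1 hj, i, hi, hij⟩

lemma IsIrreducibleMat.add_smul_one (hA : IsIrreducibleMat A) (c : ℝ) :
    IsIrreducibleMat (A + c • 1) := by
  intro S hS hSu
  obtain ⟨i, hi, j, hj, hij⟩ := hA S hS hSu
  have hji : i ≠ j := fun h => hj (h ▸ hi)
  exact ⟨i, hi, j, hj, by simpa [one_apply_ne hji] using hij⟩

lemma IsMetzler.exists_nonneg_add_smul_one (hA : IsMetzler A) :
    ∃ c : ℝ, ∀ i j, 0 ≤ (A + c • 1) i j := by
  refine ⟨∑ k, |A k k|, fun i j => ?_⟩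
  rcases eq_or_ne i j with rfl | hij
  · have := Finset.single_le_sum (fun k _ => abs_nonneg (A k k)) (Finset.mem_univ i)
    simp only [Matrix.add_apply, Matrix.smul_apply, one_apply_eq, smul_eq_mul, mul_one]
    linarith [neg_abs_le (A i i)]
  · simpa [one_apply_ne hij] using hA i j hij

theorem IsMetzler.exists_pos_eigenvector [NeZero n] (hM : IsMetzler A)
    (hIrr : IsIrreducibleMat A) :
    ∃ (r : ℝ) (u : Fin n → ℝ), (∀ i, 0 < u i) ∧ A *ᵥ u = r • u := by
  obtain ⟨c, hc⟩ := hM.exists_nonneg_add_smul_one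
  refine exists_pos_eigenvector_of_commute (P := (1 + (A + c • 1)) ^ (n - 1)) ?_
    fun x hx hx0 => (hIrr.add_smul_one c).one_add_pow_mulVec_pos hc hx hx0
  exact ((Commute.one_left A).add_left
    ((Commute.refl A).add_left ((Commute.one_left A).smul_left c))).pow_left _

lemma le_of_smul_le_mulVec {B : Matrix (Fin n) (Fin n) ℝ} {w a : Fin n → ℝ} {ρ s : ℝ}
    (hw : ∀ i, 0 < w i) (hBw : Bᵀ *ᵥ w = ρ • w) (ha : 0 ≤ a) (ha0 : a ≠ 0)
    (h : ∀ i, s * a i ≤ (B *ᵥ a) i) : s ≤ ρ := by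
  have hwa : 0 < w ⬝ᵥ a := by
    obtain ⟨i, hi⟩ := Function.ne_iff.1 ha0
    exact Finset.sum_pos' (fun j _ => mul_nonneg (hw j).le (ha j))
      ⟨i, Finset.mem_univ i, mul_pos (hw i) ((ha i).lt_of_ne' hi)⟩
  refine le_of_mul_le_mul_right ?_ hwa
  calc s * (w ⬝ᵥ a) = ∑ i, w i * (s * a i) := by
        simp only [dotProduct, Finset.mul_sum]; ring_nf
    _ ≤ w ⬝ᵥ (B *ᵥ a) := Finset.sum_le_sum fun i _ => mul_le_mul_of_nonneg_left (h i) (hw i).le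
    _ = ρ * (w ⬝ᵥ a) := by
        rw [dotProduct_mulVec, ← mulVec_transpose, hBw, smul_dotProduct, smul_eq_mul]

lemma norm_map_ofReal_mulVec_apply_le {B : Matrix (Fin n) (Fin n) ℝ} (hB : ∀ i j, 0 ≤ B i j)
    (v : Fin n → ℂ) (i : Fin n) :
    ‖(B.map Complex.ofReal *ᵥ v) i‖ ≤ (B *ᵥ fun j => ‖v j‖) i :=
  calc ‖(B.map Complex.ofReal *ᵥ v) i‖ = ‖∑ j, (B i j : ℂ) * v j‖ := rfl
    _ ≤ ∑ j, ‖(B i j : ℂ) * v j‖ := norm_sum_le _ _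
    _ = (B *ᵥ fun j => ‖v j‖) i := Finset.sum_congr rfl fun j _ => by
      rw [norm_mul, Complex.norm_of_nonneg (hB i j)]

theorem IsMetzler.re_le_of_transpose_mulVec_eq (hM : IsMetzler A) {w : Fin n → ℝ} {r : ℝ}
    (hw : ∀ i, 0 < w i) (hAw : Aᵀ *ᵥ w = r • w) {μ : ℂ}
    (hμ : isEig (A.map Complex.ofReal) μ) : μ.re ≤ r := by
  obtain ⟨v, hv0, hv⟩ := hμ
  obtain ⟨c, hc⟩ := hM.exists_nonneg_add_smul_one
  have hBv : (A + c • 1).map Complex.ofReal *ᵥ v = (μ + c) • v := by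
    have hmap : (A + c • 1).map Complex.ofReal = A.map Complex.ofReal + (c : ℂ) • 1 := by
      ext i j
      by_cases h : i = j <;> simp [h]
    rw [hmap, add_mulVec, hv, smul_mulVec, one_mulVec, add_smul]
  have hBw : (A + c • 1)ᵀ *ᵥ w = (r + c) • w := by
    rw [transpose_add, transpose_smul, transpose_one, add_mulVec, hAw, smul_mulVec,
      one_mulVec, add_smul]
  have hnorm : ‖μ + c‖ ≤ r + c := by
    refine le_of_smul_le_mulVec hw hBw (fun i => norm_nonneg (v i)) ?_ fun i => ?_
    · simpa [funext_iff] using hv0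
    · simpa [hBv, norm_mul] using norm_map_ofReal_mulVec_apply_le hc v i
  have := Complex.re_le_norm (μ + c)
  simp only [Complex.add_re, Complex.ofReal_re] at this
  linarith

theorem IsMetzler.sMax_eq [NeZero n] (hM : IsMetzler A) {u w : Fin n → ℝ} {r : ℝ}
    (hu : ∀ i, 0 < u i) (hAu : A *ᵥ u = r • u) (hw : ∀ i, 0 < w i) (hAw : Aᵀ *ᵥ w = r • w) :
    sMax A = r := by
  refine IsGreatest.csSup_eq ⟨⟨r, ⟨Complex.ofReal ∘ u, fun h => ?_, ?_⟩, rfl⟩, ?_⟩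
  · simpa using (hu 0).ne' (by simpa using congrFun h 0)
  · ext i
    have := congrFun hAu i
    simp only [mulVec, dotProduct, map_apply, Function.comp_apply, Pi.smul_apply,
      smul_eq_mul] at this ⊢
    exact_mod_cast this
  · rintro _ ⟨μ, hμ, rfl⟩
    exact hM.re_le_of_transpose_mulVec_eq hw hAw hμ

theorem IsMetzler.exists_pos_mulVec_eq_zero (hM : IsMetzler A) (hIrr : IsIrreducibleMat A)
    (hs : sMax A = 0) :
    ∃ u w : Fin n → ℝ, (∀ i, 0 < u i) ∧ (∀ i, 0 < w i) ∧ A *ᵥ u = 0 ∧ Aᵀ *ᵥ w = 0 := by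
  rcases Nat.eq_zero_or_pos n with rfl | hn
  · exact ⟨1, 1, finZeroElim, finZeroElim, Subsingleton.elim _ _, Subsingleton.elim _ _⟩
  have := NeZero.of_pos hn
  obtain ⟨r, u, hu, hAu⟩ := hM.exists_pos_eigenvector hIrr
  obtain ⟨r', w, hw, hAw⟩ := hM.transpose.exists_pos_eigenvector hIrr.transpose
  have hrr' : r = r' := le_antisymm
    (le_of_smul_le_mulVec hw hAw (fun i => (hu i).le) (fun h => (hu 0).ne' (congrFun h 0))
      fun i => by rw [hAu]; rfl)
    (le_of_smul_le_mulVec hu (by rwa [transpose_transpose]) (fun i => (hw i).le)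
      (fun h => (hw 0).ne' (congrFun h 0)) fun i => by rw [hAw]; rfl)
  subst hrr'
  obtain rfl : r = 0 := (hM.sMax_eq hu hAu hw hAw).symm.trans hs
  exact ⟨u, w, hu, hw, by simpa using hAu, by simpa using hAw⟩

end Metzler

section QuadraticForm

variable {n : ℕ} {B : Matrix (Fin n) (Fin n) ℝ} {u : Fin n → ℝ}

theorem Matrix.IsSymm.dotProduct_mulVec_eq_of_mulVec_eq_zero (hB : B.IsSymm) (hu : ∀ i, u i ≠ 0)
    (hBu : B *ᵥ u = 0) (x : Fin n → ℝ) :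
    x ⬝ᵥ (B *ᵥ x) = -(∑ i, ∑ j, B i j * u i * u j * (x i / u i - x j / u j) ^ 2) / 2 := by
  have hrow : ∀ i, ∑ j, B i j * u j = 0 := fun i => congrFun hBu i
  have hdiag : ∑ i, ∑ j, B i j * u j * (x i ^ 2 / u i) = 0 :=
    Finset.sum_eq_zero fun i _ => by rw [← Finset.sum_mul, hrow, zero_mul]
  have hdiag' : ∑ i, ∑ j, B i j * u i * (x j ^ 2 / u j) = 0 := by
    rw [Finset.sum_comm, ← hdiag]
    exact Finset.sum_congr rfl fun i _ => Finset.sum_congr rfl fun j _ => by rw [hB.apply]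
  have hform : x ⬝ᵥ (B *ᵥ x) = ∑ i, ∑ j, x i * B i j * x j := by
    simp only [dotProduct, mulVec, Finset.mul_sum, mul_assoc]
  have hterm : ∀ i j, B i j * u i * u j * (x i / u i - x j / u j) ^ 2 =
      B i j * u j * (x i ^ 2 / u i) + B i j * u i * (x j ^ 2 / u j) -
        2 * (x i * B i j * x j) := by
    intro i j
    field_simp [hu i, hu j]
    ring
  simp only [hterm, Finset.sum_sub_distrib, Finset.sum_add_distrib, hdiag, hdiag',
    ← Finset.mul_sum, hform]
  ring

lemma IsMetzler.mul_sq_nonneg (hM : IsMetzler B) (hu : ∀ i, 0 < u i) (x : Fin n → ℝ)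
    (i j : Fin n) : 0 ≤ B i j * u i * u j * (x i / u i - x j / u j) ^ 2 := by
  rcases eq_or_ne i j with rfl | hij
  · simp
  · have := hM i j hij
    have := hu i
    have := hu j
    positivity

theorem IsMetzler.negSemiDefQ_of_mulVec_eq_zero (hM : IsMetzler B) (hB : B.IsSymm)
    (hu : ∀ i, 0 < u i) (hBu : B *ᵥ u = 0) : NegSemiDefQ B := by
  intro x
  rw [hB.dotProduct_mulVec_eq_of_mulVec_eq_zero (fun i => (hu i).ne') hBu]
  have := Finset.sum_nonneg fun i (_ : i ∈ Finset.univ) =>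
    Finset.sum_nonneg fun j (_ : j ∈ Finset.univ) => hM.mul_sq_nonneg hu x i j
  linarith

theorem IsMetzler.eq_smul_of_mulVec_eq_zero (hM : IsMetzler B) (hIrr : IsIrreducibleMat B)
    (hB : B.IsSymm) (hu : ∀ i, 0 < u i) (hBu : B *ᵥ u = 0) {z : Fin n → ℝ}
    (hz : B *ᵥ z = 0) : ∃ c : ℝ, z = c • u := by
  rcases isEmpty_or_nonempty (Fin n) with hn | ⟨⟨i₀⟩⟩
  · exact ⟨0, Subsingleton.elim _ _⟩
  have hsum := hB.dotProduct_mulVec_eq_of_mulVec_eq_zero (fun i => (hu i).ne') hBu z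
  rw [hz, dotProduct_zero, eq_comm, div_eq_zero_iff, neg_eq_zero] at hsum
  have hterm : ∀ i j, B i j * u i * u j * (z i / u i - z j / u j) ^ 2 = 0 := fun i j =>
    (Finset.sum_eq_zero_iff_of_nonneg fun j _ => hM.mul_sq_nonneg hu z i j).1
      ((Finset.sum_eq_zero_iff_of_nonneg fun i _ =>
        Finset.sum_nonneg fun j _ => hM.mul_sq_nonneg hu z i j).1
        (hsum.resolve_right two_ne_zero) i (Finset.mem_univ i)) j (Finset.mem_univ j)
  set S : Set (Fin n) := {j | z j / u j = z i₀ / u i₀}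
  have hconst : S = univ := by
    by_contra hne
    obtain ⟨i, hi, j, hj, hij⟩ := hIrr S ⟨i₀, rfl⟩ hne
    have := hterm i j
    simp only [mul_eq_zero, (hu i).ne', (hu j).ne', hij, pow_eq_zero_iff two_ne_zero,
      sub_eq_zero, false_or] at this
    exact hj (this.symm.trans hi)
  refine ⟨z i₀ / u i₀, funext fun j => ?_⟩
  rw [Pi.smul_apply, smul_eq_mul, ← (eq_univ_iff_forall.1 hconst j : z j / u j = _),
    div_mul_cancel₀ _ (hu j).ne']

end QuadraticForm

section DiagonalScaling

variable {n : ℕ} (A : Matrix (Fin n) (Fin n) ℝ) (d : Fin n → ℝ)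

lemma transpose_mul_diagonal_add_diagonal_mul_apply (i j : Fin n) :
    (Aᵀ * diagonal d + diagonal d * A) i j = A j i * d j + d i * A i j := by
  simp [mul_diagonal, diagonal_mul]

lemma isSymm_transpose_mul_diagonal_add_diagonal_mul :
    (Aᵀ * diagonal d + diagonal d * A).IsSymm := by
  simp [IsSymm, transpose_add, transpose_mul, add_comm]

variable {A d}

lemma IsMetzler.transpose_mul_diagonal_add_diagonal_mul (hM : IsMetzler A) (hd : 0 ≤ d) :
    IsMetzler (Aᵀ * diagonal d + diagonal d * A) := fun i j hij => by
  rw [transpose_mul_diagonal_add_diagonal_mul_apply]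
  exact add_nonneg (mul_nonneg (hM j i hij.symm) (hd j)) (mul_nonneg (hd i) (hM i j hij))

lemma IsIrreducibleMat.transpose_mul_diagonal_add_diagonal_mul (hM : IsMetzler A)
    (hIrr : IsIrreducibleMat A) (hd : ∀ i, 0 < d i) :
    IsIrreducibleMat (Aᵀ * diagonal d + diagonal d * A) := by
  intro S hS hSu
  obtain ⟨i, hi, j, hj, hij⟩ := hIrr S hS hSu
  have hji : i ≠ j := fun h => hj (h ▸ hi)
  refine ⟨i, hi, j, hj, ne_of_gt ?_⟩
  rw [transpose_mul_diagonal_add_diagonal_mul_apply]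
  exact add_pos_of_nonneg_of_pos (mul_nonneg (hM j i hji.symm) (hd j).le)
    (mul_pos (hd i) ((hM i j hji).lt_of_ne' hij))

end DiagonalScaling

/-- For an irreducible Metzler matrix `A` with `s(A) = 0`, there is a positive definite
diagonal `D` with `AᵀD + DA` negative semi-definite; moreover `0` is a simple eigenvalue
of `AᵀD + DA` with a positive eigenvector. -/
theorem stmt17 {n : ℕ} (A : Matrix (Fin n) (Fin n) ℝ)
    (hM : IsMetzler A) (hIrr : IsIrreducibleMat A) (hs : sMax A = 0) :
    ∃ d : Fin n → ℝ, (∀ i, 0 < d i) ∧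
      NegSemiDefQ (Aᵀ * diagonal d + diagonal d * A) ∧
      ∃ w : Fin n → ℝ, (∀ i, 0 < w i) ∧
        (Aᵀ * diagonal d + diagonal d * A).mulVec w = 0 ∧
        ∀ z : Fin n → ℝ, (Aᵀ * diagonal d + diagonal d * A).mulVec z = 0 →
          ∃ c : ℝ, z = c • w := by
  obtain ⟨u, w, hu, hw, hAu, hAw⟩ := hM.exists_pos_mulVec_eq_zero hIrr hs
  set d : Fin n → ℝ := fun i => w i / u i
  have hd : ∀ i, 0 < d i := fun i => div_pos (hw i) (hu i)
  have hBu : (Aᵀ * diagonal d + diagonal d * A) *ᵥ u = 0 := by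
    have hdu : diagonal d *ᵥ u = w := funext fun i => by
      rw [mulVec_diagonal, div_mul_cancel₀ _ (hu i).ne']
    rw [add_mulVec, ← mulVec_mulVec, ← mulVec_mulVec, hdu, hAu, hAw, mulVec_zero, add_zero]
  have hBM := hM.transpose_mul_diagonal_add_diagonal_mul fun i => (hd i).le
  have hBsymm := isSymm_transpose_mul_diagonal_add_diagonal_mul A d
  refine ⟨d, hd, hBM.negSemiDefQ_of_mulVec_eq_zero hBsymm hu hBu, u, hu, hBu, fun z hz => ?_⟩
  exact hBM.eq_smul_of_mulVec_eq_zero (hIrr.transpose_mul_diagonal_add_diagonal_mul hM hd)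
    hBsymm hu hBu hz
end

section
/- Consider the system du/dt = (I_N − diag(u)) f(u) − D_γ u on [0,1]ᴺ, where f is continuous, f(0)=0, f ≥ 0, f concave, and Q₁ := J_f(0) − D_γ satisfies s(Q₁) < 0 with Q₁ irreducible Metzler. Then V(u) = uᵀPu, with P the positive definite diagonal matrix from diagonal stability of Q₁, satisfies dV/dt ≤ uᵀ(Q₁ᵀP + PQ₁)u ≤ 0 along solutions, with equality only at u = 0. -/
open Matrix

/-!
Since `P = diag p` is symmetric, `uᵀ(Q₁ᵀP + PQ₁)u = 2 uᵀP Q₁u`. For `u ≥ 0` and `f(u) ≥ 0` the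
logistic damping only lowers the field, `(1 − uᵢ) fᵢ(u) ≤ fᵢ(u) ≤ (J u)ᵢ`, so the vector field is
bounded by its linearisation `Q₁ u` componentwise, and pairing with the nonnegative weights `pᵢ uᵢ`
preserves this. The remaining two claims are negative definiteness of `Q₁ᵀP + PQ₁`.
-/

namespace Matrix

variable {n R : Type*} [Fintype n]

theorem dotProduct_transpose_mul_add_mul_mulVec_self [CommRing R] (A P : Matrix n n R)
    (hP : Pᵀ = P) (u : n → R) :
    u ⬝ᵥ (Aᵀ * P + P * A) *ᵥ u = 2 * (u ⬝ᵥ P *ᵥ (A *ᵥ u)) := by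
  have hswap : u ⬝ᵥ Aᵀ *ᵥ (P *ᵥ u) = u ⬝ᵥ P *ᵥ (A *ᵥ u) := by
    rw [dotProduct_mulVec, vecMul_transpose, dotProduct_mulVec, dotProduct_comm,
      ← hP, vecMul_transpose, hP]
  rw [add_mulVec, dotProduct_add, ← mulVec_mulVec, ← mulVec_mulVec, hswap, two_mul]

variable [DecidableEq n]

theorem dotProduct_diagonal_mulVec_le_of_le [Semiring R] [PartialOrder R] [IsOrderedRing R]
    {p u v w : n → R} (hp : 0 ≤ p) (hu : 0 ≤ u) (hvw : v ≤ w) :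
    u ⬝ᵥ diagonal p *ᵥ v ≤ u ⬝ᵥ diagonal p *ᵥ w :=
  dotProduct_le_dotProduct_of_nonneg_left
    (fun i => by simpa only [mulVec_diagonal] using mul_le_mul_of_nonneg_left (hvw i) (hp i)) hu

theorem logistic_field_le_mulVec_sub_diagonal [CommRing R] [PartialOrder R] [IsOrderedRing R]
    {J : Matrix n n R} {γ u F : n → R} (hu : 0 ≤ u) (hF : 0 ≤ F) (hFJ : F ≤ J *ᵥ u) :
    (fun i => (1 - u i) * F i - γ i * u i) ≤ (J - diagonal γ) *ᵥ u := by
  intro i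
  have hdamp : (1 - u i) * F i ≤ F i := by
    rw [sub_mul, one_mul]
    exact sub_le_self _ (mul_nonneg (hu i) (hF i))
  rw [sub_mulVec, Pi.sub_apply, mulVec_diagonal]
  exact sub_le_sub_right (hdamp.trans (hFJ i)) _

end Matrix

theorem NegDefQ.dotProduct_mulVec_self_nonpos {n : ℕ} {P : Matrix (Fin n) (Fin n) ℝ}
    (hP : NegDefQ P) (u : Fin n → ℝ) : u ⬝ᵥ P *ᵥ u ≤ 0 := by
  rcases eq_or_ne u 0 with rfl | hu
  · simp
  · exact (hP u hu).le

theorem NegDefQ.eq_zero_of_dotProduct_mulVec_self_eq_zero {n : ℕ} {P : Matrix (Fin n) (Fin n) ℝ}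
    (hP : NegDefQ P) {u : Fin n → ℝ} (h : u ⬝ᵥ P *ᵥ u = 0) : u = 0 := by
  by_contra hu
  exact (hP u hu).ne h

theorem stmt18_general {N : ℕ} (f : (Fin N → ℝ) → Fin N → ℝ) (J Q₁ : Matrix (Fin N) (Fin N) ℝ)
    (γ p : Fin N → ℝ) (hp : ∀ i, 0 < p i)
    (hfnn : ∀ u ∈ Set.Icc (0 : Fin N → ℝ) 1, ∀ i, 0 ≤ f u i)
    (hflin : ∀ u ∈ Set.Icc (0 : Fin N → ℝ) 1, ∀ i, f u i ≤ J.mulVec u i)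
    (hQ : Q₁ = J - diagonal γ)
    (hnd : NegDefQ (Q₁ᵀ * diagonal p + diagonal p * Q₁)) :
    ∀ u ∈ Set.Icc (0 : Fin N → ℝ) 1,
      2 * (u ⬝ᵥ (diagonal p).mulVec (fun i => (1 - u i) * f u i - γ i * u i))
          ≤ u ⬝ᵥ (Q₁ᵀ * diagonal p + diagonal p * Q₁).mulVec u ∧
        u ⬝ᵥ (Q₁ᵀ * diagonal p + diagonal p * Q₁).mulVec u ≤ 0 ∧
        (u ⬝ᵥ (Q₁ᵀ * diagonal p + diagonal p * Q₁).mulVec u = 0 → u = 0) := by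
  intro u hu
  refine ⟨?_, hnd.dotProduct_mulVec_self_nonpos u,
    hnd.eq_zero_of_dotProduct_mulVec_self_eq_zero⟩
  have hfield : (fun i => (1 - u i) * f u i - γ i * u i) ≤ Q₁ *ᵥ u :=
    hQ ▸ logistic_field_le_mulVec_sub_diagonal hu.1 (hfnn u hu) (hflin u hu)
  rw [dotProduct_transpose_mul_add_mul_mulVec_self _ _ (diagonal_transpose p)]
  gcongr
  exact dotProduct_diagonal_mulVec_le_of_le (fun i => (hp i).le) hu.1 hfield

/-- Lyapunov estimate for `du/dt = (I − diag u)f(u) − D_γ u`: with `V(u) = uᵀPu` and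
`P = diag(p)` from diagonal stability of `Q₁ = J_f(0) − D_γ`, one has
`dV/dt = 2uᵀP[(I − diag u)f(u) − D_γ u] ≤ uᵀ(Q₁ᵀP + PQ₁)u ≤ 0` on `[0,1]ᴺ`,
with equality only at `u = 0`. -/
theorem stmt18 {N : ℕ} (f : (Fin N → ℝ) → Fin N → ℝ) (J Q₁ : Matrix (Fin N) (Fin N) ℝ)
    (γ p : Fin N → ℝ) (hγ : ∀ i, 0 < γ i) (hp : ∀ i, 0 < p i)
    (hfc : Continuous f) (hf0 : f 0 = 0)
    (hfnn : ∀ u ∈ Set.Icc (0 : Fin N → ℝ) 1, ∀ i, 0 ≤ f u i)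
    (hflin : ∀ u ∈ Set.Icc (0 : Fin N → ℝ) 1, ∀ i, f u i ≤ J.mulVec u i)
    (hQ : Q₁ = J - diagonal γ)
    (hM : IsMetzler Q₁) (hIrr : IsIrreducibleMat Q₁) (hs : sMax Q₁ < 0)
    (hnd : NegDefQ (Q₁ᵀ * diagonal p + diagonal p * Q₁)) :
    ∀ u ∈ Set.Icc (0 : Fin N → ℝ) 1,
      2 * (u ⬝ᵥ (diagonal p).mulVec (fun i => (1 - u i) * f u i - γ i * u i))
          ≤ u ⬝ᵥ (Q₁ᵀ * diagonal p + diagonal p * Q₁).mulVec u ∧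
        u ⬝ᵥ (Q₁ᵀ * diagonal p + diagonal p * Q₁).mulVec u ≤ 0 ∧
        (u ⬝ᵥ (Q₁ᵀ * diagonal p + diagonal p * Q₁).mulVec u = 0 → u = 0) :=
  stmt18_general f J Q₁ γ p hp hfnn hflin hQ hnd
end
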